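/- Let n ≥ 3 and 1 ≤ k ≤ n−2 be integers and let c : ℝⁿ → ℝ² be the index-k cusp map. The image of the critical set of c under c equals the cuspidal cubic {(s,u) ∈ ℝ² : u² = 4s³}, and the restriction of c to its critical set is injective. -/

import Mathlib

/-!
The derivative of `c` at `x` is `v ↦ (v₀, ∇g(x) · v)`, with `g` the second component, so it is
not surjective exactly when `∇g(x)` is a multiple of `e₀`, i.e. when `x₀ = x₁²` and every other
coordinate vanishes. The critical set is thus the curve `t ↦ (t², t, 0, …, 0)`, which `c` maps
to `(t², -2t³)`; this parametrisation is injective because cubing is, and it sweeps out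
`u² = 4s³` (take `t = -u/(2s)`).
-/

open Function Set

theorem LinearMap.surjective_iff_exists_fst_eq_zero_snd_ne_zero {𝕜 E : Type*} [Field 𝕜]
    [AddCommGroup E] [Module 𝕜 E] (L : E →ₗ[𝕜] 𝕜 × 𝕜) (hL : Surjective fun v => (L v).1) :
    Surjective L ↔ ∃ v, (L v).1 = 0 ∧ (L v).2 ≠ 0 := by
  constructor
  · intro h
    obtain ⟨v, hv⟩ := h (0, 1)
    exact ⟨v, by simp [hv]⟩
  · rintro ⟨v₀, hv₀, hβ⟩ ⟨s, t⟩
    obtain ⟨u, hu⟩ := hL s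
    refine ⟨u + ((t - (L u).2) / (L v₀).2) • v₀, ?_⟩
    ext
    · simp [hu, hv₀]
    · simp [hβ]

theorem exists_sq_eq_and_neg_two_mul_pow_three_eq {s u : ℝ} (h : u ^ 2 = 4 * s ^ 3) :
    ∃ t : ℝ, t ^ 2 = s ∧ -2 * t ^ 3 = u := by
  rcases eq_or_ne s 0 with rfl | hs
  · exact ⟨0, by simp, by simp_all⟩
  · refine ⟨-u / (2 * s), ?_, ?_⟩
    · field_simp
      linear_combination h
    · have hu : u ≠ 0 := by rintro rfl; simp_all
      field_simp
      linear_combination h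

namespace Cusp

def cubicParam (t : ℝ) : ℝ × ℝ := (t ^ 2, -2 * t ^ 3)

theorem range_cubicParam : range cubicParam = {p : ℝ × ℝ | p.2 ^ 2 = 4 * p.1 ^ 3} := by
  ext ⟨s, u⟩
  simp only [cubicParam, mem_range, Prod.mk.injEq, mem_ofPred_eq]
  refine ⟨?_, exists_sq_eq_and_neg_two_mul_pow_three_eq⟩
  rintro ⟨t, rfl, rfl⟩
  ring

theorem cubicParam_injective : Injective cubicParam := fun s t h =>
  Odd.pow_injective (by decide : Odd 3) (by simpa [cubicParam] using congrArg Prod.snd h)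

variable {ι : Type*}

section

variable [Fintype ι] (a b : ι) (σ : ι → ℝ)

def cuspMap (x : ι → ℝ) : ℝ × ℝ :=
  (x a, x b ^ 3 - 3 * x a * x b + ∑ i, σ i * x i ^ 2)

theorem fderiv_cuspMap_apply (x v : ι → ℝ) :
    fderiv ℝ (cuspMap a b σ) x v =
      (v a, 3 * x b ^ 2 * v b - 3 * (x b * v a + x a * v b) + ∑ i, 2 * σ i * x i * v i) := by
  have hproj (i : ι) := hasFDerivAt_apply (𝕜 := ℝ) i x
  have hsnd := (((hproj b).pow 3).fun_sub (((hproj a).const_mul 3).fun_mul (hproj b))).fun_add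
    (HasFDerivAt.fun_sum (u := Finset.univ) fun i _ => ((hproj i).pow 2).const_mul (σ i))
  have h : HasFDerivAt (cuspMap a b σ) _ x := (hproj a).prodMk hsnd
  rw [h.fderiv]
  simp only [Nat.add_one_sub_one, nsmul_eq_mul, Nat.cast_ofNat, pow_one,
    ContinuousLinearMap.prod_apply, ContinuousLinearMap.proj_apply, add_apply, sub_apply,
    smul_apply, smul_eq_mul, sum_apply, Prod.mk.injEq, true_and]
  ring_nf

end

variable [DecidableEq ι] {a b : ι} {σ : ι → ℝ}

variable (a b) in
def cuspCurve (t : ℝ) : ι → ℝ := Pi.single a (t ^ 2) + Pi.single b t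

theorem cuspCurve_apply_left (hab : a ≠ b) (t : ℝ) : cuspCurve a b t a = t ^ 2 := by
  simp [cuspCurve, hab]

theorem cuspCurve_apply_right (hab : a ≠ b) (t : ℝ) : cuspCurve a b t b = t := by
  simp [cuspCurve, hab.symm]

theorem cuspCurve_apply_of_ne {i : ι} (hia : i ≠ a) (hib : i ≠ b) (t : ℝ) :
    cuspCurve a b t i = 0 := by
  simp [cuspCurve, hia, hib]

theorem mul_cuspCurve_eq_zero (hσa : σ a = 0) (hσb : σ b = 0) (t : ℝ) (i : ι) :
    σ i * cuspCurve a b t i = 0 := by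
  rcases eq_or_ne i a with rfl | hia
  · rw [hσa, zero_mul]
  rcases eq_or_ne i b with rfl | hib
  · rw [hσb, zero_mul]
  · rw [cuspCurve_apply_of_ne hia hib, mul_zero]

variable [Fintype ι]

theorem not_surjective_fderiv_cuspMap_iff (hab : a ≠ b) (hσa : σ a = 0) (hσb : σ b = 0)
    (x : ι → ℝ) :
    ¬ Surjective (fderiv ℝ (cuspMap a b σ) x) ↔ x a = x b ^ 2 ∧ ∀ i, σ i * x i = 0 := by
  have hfst : Surjective fun v => ((fderiv ℝ (cuspMap a b σ) x).toLinearMap v).1 := fun s =>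
    ⟨fun _ => s, by simp [fderiv_cuspMap_apply]⟩
  rw [← ContinuousLinearMap.coe_coe,
    LinearMap.surjective_iff_exists_fst_eq_zero_snd_ne_zero _ hfst]
  simp only [ContinuousLinearMap.coe_coe, fderiv_cuspMap_apply, not_exists, not_and, not_not]
  constructor
  · intro h
    have hxa : x a = x b ^ 2 := by
      have := h (Pi.single b 1) (by simp [hab])
      simp only [Pi.single_eq_same, Pi.single_eq_of_ne hab, Pi.single_apply, mul_one, mul_zero,
        mul_ite, Finset.sum_ite_eq', Finset.mem_univ, if_true, hσb, zero_mul, add_zero] at this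
      linarith
    refine ⟨hxa, fun i => ?_⟩
    rcases eq_or_ne i a with rfl | hia
    · rw [hσa, zero_mul]
    · have := h (Pi.single i 1) (by simp [hia.symm])
      simpa [Pi.single_apply, hxa, hia.symm] using this
  · rintro ⟨hxa, hσx⟩ v hva
    simp [hva, hxa, mul_assoc, hσx]

theorem setOf_not_surjective_fderiv_cuspMap (hab : a ≠ b) (hσa : σ a = 0) (hσb : σ b = 0)
    (hσ : ∀ i, i ≠ a → i ≠ b → σ i ≠ 0) :
    {x | ¬ Surjective (fderiv ℝ (cuspMap a b σ) x)} = range (cuspCurve a b) := by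
  ext x
  simp only [mem_ofPred_eq, not_surjective_fderiv_cuspMap_iff hab hσa hσb, mem_range]
  constructor
  · rintro ⟨hxa, hσx⟩
    refine ⟨x b, funext fun i => ?_⟩
    rcases eq_or_ne i a with rfl | hia
    · rw [cuspCurve_apply_left hab, hxa]
    rcases eq_or_ne i b with rfl | hib
    · rw [cuspCurve_apply_right hab]
    · rw [cuspCurve_apply_of_ne hia hib, (mul_eq_zero.1 (hσx i)).resolve_left (hσ i hia hib)]
  · rintro ⟨t, rfl⟩
    exact ⟨by rw [cuspCurve_apply_left hab, cuspCurve_apply_right hab],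
      mul_cuspCurve_eq_zero hσa hσb t⟩

theorem cuspMap_comp_cuspCurve (hab : a ≠ b) (hσa : σ a = 0) (hσb : σ b = 0) :
    cuspMap a b σ ∘ cuspCurve a b = cubicParam := by
  funext t
  have hsum : ∑ i, σ i * cuspCurve a b t i ^ 2 = 0 := Finset.sum_eq_zero fun i _ => by
    rw [sq, ← mul_assoc, mul_cuspCurve_eq_zero hσa hσb, zero_mul]
  simp only [comp_apply, cuspMap, hsum, cuspCurve_apply_left hab, cuspCurve_apply_right hab,
    cubicParam]
  ring_nf

def indexSigns {n : ℕ} (k : ℕ) (i : Fin n) : ℝ :=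
  if (i : ℕ) ≤ 1 then 0 else if (i : ℕ) ≤ k + 1 then -1 else 1

end Cusp

open Cusp

/-- The image under the index-`k` cusp map `c : ℝⁿ → ℝ²` of its critical set
equals the cuspidal cubic `{(s,u) : u² = 4s³}`, and the restriction of `c` to its critical
set is injective. -/
theorem stmt11 (n k : ℕ) (hn : 3 ≤ n)
    (c : (Fin n → ℝ) → ℝ × ℝ)
    (hc : ∀ x : Fin n → ℝ, c x =
      (x ⟨0, by omega⟩,
        (x ⟨1, by omega⟩) ^ 3 - 3 * x ⟨0, by omega⟩ * x ⟨1, by omega⟩ +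
          ∑ i : Fin n, if (i : ℕ) ≤ 1 then 0
            else if (i : ℕ) ≤ k + 1 then -(x i) ^ 2 else (x i) ^ 2))
    (C : Set (Fin n → ℝ))
    (hC : C = {x : Fin n → ℝ | ¬ Function.Surjective (fderiv ℝ c x)}) :
    c '' C = {p : ℝ × ℝ | p.2 ^ 2 = 4 * p.1 ^ 3} ∧ Set.InjOn c C := by
  set a : Fin n := ⟨0, by omega⟩
  set b : Fin n := ⟨1, by omega⟩
  have hab : a ≠ b := by simp [a, b, Fin.ext_iff]
  have hσa : indexSigns k a = 0 := by simp [indexSigns, a]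
  have hσb : indexSigns k b = 0 := by simp [indexSigns, b]
  have hσ (i : Fin n) (hia : i ≠ a) (hib : i ≠ b) : indexSigns k i ≠ 0 := by
    have : 1 < (i : ℕ) := by simp [a, b, Fin.ext_iff] at hia hib; omega
    rw [indexSigns, if_neg (by omega)]
    split_ifs <;> norm_num
  have hc' : c = cuspMap a b (indexSigns k) := funext fun x => by
    rw [hc, cuspMap]
    congr 2
    refine Finset.sum_congr rfl fun i _ => ?_
    unfold indexSigns
    split_ifs <;> ring
  have hcomp := cuspMap_comp_cuspCurve hab hσa hσb
  rw [hC, hc', setOf_not_surjective_fderiv_cuspMap hab hσa hσb hσ, ← range_comp, hcomp]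
  exact ⟨range_cubicParam, Injective.injOn_range (hcomp ▸ cubicParam_injective)⟩
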